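/- arXiv:1609.00976 — 2 statements merged into one kernel-verified Lean document; each statement's English description precedes it below -/
import Mathlib

section
/- Let y ∈ C¹((0,T]) be bounded on (0,T], let s ∈ [1,2), l ∈ ℕ, and let (a_n) be a decreasing sequence of consecutive zeros of y in (0,T] with a_n → 0. Suppose there exist constants c₁, c₂, ε₀ > 0 and an index function k(ε) on (0,ε₀] satisfying |a_n − a_{n+1}| ≤ ε for all n ≥ k(ε) and ε ∈ (0,ε₀), such that for all ε ∈ (0,ε₀): (1) c₁ ε^{2−s} (log(1/ε))^l ≤ Σ_{n ≥ k(ε)} max_{x ∈ [a_{n+1},a_n]} |y(x)| · (a_n − a_{n+1}), and (2) a_{k(ε)} · sup_{x ∈ (0,a_{k(ε)}]} |y(x)| + ε ∫_{a_{k(ε)}}^{a₁} |y'(x)| dx ≤ c₂ ε^{2−s} (log(1/ε))^l. Then the graph G(y) of y has box dimension s and is Minkowski degenerate with M_*^s(G(y)) = M^{*s}(G(y)) = ∞. -/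
open MeasureTheory Filter Metric Set Topology ENNReal

noncomputable section

/-- The Euclidean plane `ℝ²`. -/
abbrev E2 := EuclideanSpace ℝ (Fin 2)

/-- The point of the Euclidean plane with coordinates `a`, `b`. -/
def pt (a b : ℝ) : E2 := (WithLp.equiv 2 (Fin 2 → ℝ)).symm ![a, b]

/-- The lower `s`-dimensional Minkowski content of `A ⊆ ℝ²`:
`liminf_{ε→0⁺} |A_ε| / ε^(2-s)`, where `A_ε` is the open `ε`-neighbourhood of `A`. -/
def lowerMink (s : ℝ) (A : Set E2) : ℝ≥0∞ :=
  Filter.liminf (fun ε : ℝ => volume (Metric.thickening ε A) / ENNReal.ofReal (ε ^ (2 - s)))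
    (𝓝[>] (0:ℝ))

/-- The upper `s`-dimensional Minkowski content of `A ⊆ ℝ²`. -/
def upperMink (s : ℝ) (A : Set E2) : ℝ≥0∞ :=
  Filter.limsup (fun ε : ℝ => volume (Metric.thickening ε A) / ENNReal.ofReal (ε ^ (2 - s)))
    (𝓝[>] (0:ℝ))

/-- The lower box dimension of `A ⊆ ℝ²`. -/
def lowerDimB (A : Set E2) : ℝ := sInf {s : ℝ | 0 ≤ s ∧ lowerMink s A = 0}

/-- The upper box dimension of `A ⊆ ℝ²`. -/
def upperDimB (A : Set E2) : ℝ := sInf {s : ℝ | 0 ≤ s ∧ upperMink s A = 0}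

/-- The box dimension of `A` exists and equals `d`. -/
def dimBEq (A : Set E2) (d : ℝ) : Prop := lowerDimB A = d ∧ upperDimB A = d

/-- `A` is Minkowski nondegenerate for the dimension `d`:
`0 < M_*^d(A) ≤ M^{*d}(A) < ∞`. -/
def minkNondeg (A : Set E2) (d : ℝ) : Prop := 0 < lowerMink d A ∧ upperMink d A < ⊤

/-- `A` is Minkowski measurable with `d`-dimensional Minkowski content the value `v ∈ (0,∞)`. -/
def minkMeasurableWith (A : Set E2) (d v : ℝ) : Prop :=
  0 < v ∧ lowerMink d A = ENNReal.ofReal v ∧ upperMink d A = ENNReal.ofReal v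

/-- The graph of `g` over `S ⊆ ℝ`, as a subset of the plane. -/
def graphOn (g : ℝ → ℝ) (S : Set ℝ) : Set E2 := (fun t => pt t (g t)) '' S

/-- The curve `τ ↦ (X τ, Y τ)`, `τ ≥ τ₀`, as a subset of the plane. -/
def curveFrom (X Y : ℝ → ℝ) (τ₀ : ℝ) : Set E2 := (fun τ => pt (X τ) (Y τ)) '' Set.Ici τ₀

/-- The radial `ε`-neighbourhood of `A ⊆ ℝ²`: the set of points `y` whose distance to
`A ∩ {t • y : t ≥ 0}` is `< ε`. -/
def rayNbhd (ε : ℝ) (A : Set E2) : Set E2 :=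
  {y | ∃ z ∈ A, (∃ t : ℝ, 0 ≤ t ∧ z = t • y) ∧ dist y z < ε}

/-- The radial lower `s`-dimensional Minkowski content. -/
def radLowerMink (s : ℝ) (A : Set E2) : ℝ≥0∞ :=
  Filter.liminf (fun ε : ℝ => volume (rayNbhd ε A) / ENNReal.ofReal (ε ^ (2 - s))) (𝓝[>] (0:ℝ))

/-- The radial upper `s`-dimensional Minkowski content. -/
def radUpperMink (s : ℝ) (A : Set E2) : ℝ≥0∞ :=
  Filter.limsup (fun ε : ℝ => volume (rayNbhd ε A) / ENNReal.ofReal (ε ^ (2 - s))) (𝓝[>] (0:ℝ))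

/-- The radial lower box dimension. -/
def radLowerDimB (A : Set E2) : ℝ := sInf {s : ℝ | 0 ≤ s ∧ radLowerMink s A = 0}

/-- The radial upper box dimension. -/
def radUpperDimB (A : Set E2) : ℝ := sInf {s : ℝ | 0 ≤ s ∧ radUpperMink s A = 0}

/-- The radial box dimension of `A` exists and equals `d`. -/
def radDimBEq (A : Set E2) (d : ℝ) : Prop := radLowerDimB A = d ∧ radUpperDimB A = d

/-- The spiral `r = f(φ)` in polar coordinates, over the set of angles `S`. -/
def spiralArc (f : ℝ → ℝ) (S : Set ℝ) : Set E2 :=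
  (fun φ => pt (f φ * Real.cos φ) (f φ * Real.sin φ)) '' S

/-- `u(x) ≃₁ v(x)` as `x → 0⁺`: `u/v → 1` and `u'/v' → 1` as `x → 0⁺`. -/
def asympOneZero (u v : ℝ → ℝ) : Prop :=
  Tendsto (fun x => u x / v x) (𝓝[>] (0:ℝ)) (𝓝 1) ∧
  Tendsto (fun x => deriv u x / deriv v x) (𝓝[>] (0:ℝ)) (𝓝 1)

lemma pt_zero (a b : ℝ) : pt a b 0 = a := rfl
lemma pt_one (a b : ℝ) : pt a b 1 = b := rfl
lemma pt_coords (p : E2) : pt (p 0) (p 1) = p := by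
  ext i; fin_cases i <;> simp [pt]

lemma coord_le_dist (p q : E2) (i : Fin 2) : |p i - q i| ≤ dist p q := by
  rw [EuclideanSpace.dist_eq]
  rw [show |p i - q i| = Real.sqrt ((p i - q i)^2) from (Real.sqrt_sq_eq_abs _).symm]
  apply Real.sqrt_le_sqrt
  have := Finset.single_le_sum (f := fun j => (p j - q j)^2) (fun j _ => sq_nonneg _)
    (Finset.mem_univ i)
  simpa [Real.dist_eq, sq_abs] using this

lemma dist_pt_same (x x' v : ℝ) : dist (pt x v) (pt x' v) = |x - x'| := by
  rw [EuclideanSpace.dist_eq, Fin.sum_univ_two]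
  simp [pt, Real.dist_eq, Real.sqrt_sq_eq_abs, sq_abs]

lemma measurable_coord (i : Fin 2) : Measurable (fun p : E2 => p i) := by
  have : Measurable ((MeasurableEquiv.toLp 2 (Fin 2 → ℝ)).symm) := (MeasurableEquiv.toLp 2 (Fin 2 → ℝ)).symm.measurable
  exact (measurable_pi_apply i).comp this

lemma measurable_box {I J : Set ℝ} (hI : MeasurableSet I) (hJ : MeasurableSet J) :
    MeasurableSet {p : E2 | p 0 ∈ I ∧ p 1 ∈ J} := by
  exact ((measurable_coord 0) hI).inter ((measurable_coord 1) hJ)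

lemma volume_box (I J : Set ℝ) (hI : MeasurableSet I) (hJ : MeasurableSet J) :
    volume {p : E2 | p 0 ∈ I ∧ p 1 ∈ J} = volume I * volume J := by
  have hmp := EuclideanSpace.volume_preserving_symm_measurableEquiv_toLp (Fin 2)
  have hset : {p : E2 | p 0 ∈ I ∧ p 1 ∈ J} =
      ((MeasurableEquiv.toLp 2 (Fin 2 → ℝ)).symm) ⁻¹' (Set.univ.pi ![I, J]) := by
    ext p
    simp [Set.mem_pi, Fin.forall_fin_two]
  rw [hset, hmp.measure_preimage ((MeasurableSet.univ_pi (by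
      intro i; fin_cases i <;> simpa using ‹_›)).nullMeasurableSet)]
  rw [volume_pi_pi]
  simp [Fin.prod_univ_two]




lemma ioo_of_ne {y : ℝ → ℝ} {α β x : ℝ} (hx : x ∈ Icc α β) (hy : y x ≠ 0)
    (h0a : y α = 0) (h0b : y β = 0) : x ∈ Ioo α β := by
  rcases hx with ⟨h1, h2⟩
  constructor
  · rcases eq_or_lt_of_le h1 with rfl|h; · exact absurd h0a hy
    exact h
  · rcases eq_or_lt_of_le h2 with rfl|h; · exact absurd h0b hy
    exact h

lemma sign_const {y : ℝ → ℝ} {α β : ℝ} (hc : ContinuousOn y (Icc α β))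
    (hne : ∀ x ∈ Ioo α β, y x ≠ 0) (h0a : y α = 0) (h0b : y β = 0) :
    (∀ x ∈ Icc α β, 0 ≤ y x) ∨ (∀ x ∈ Icc α β, y x ≤ 0) := by
  by_contra h
  push_neg at h
  obtain ⟨⟨x1, hx1, hy1⟩, ⟨x2, hx2, hy2⟩⟩ := h
  have hx1o : x1 ∈ Ioo α β := ioo_of_ne hx1 (by intro h; rw [h] at hy1; exact lt_irrefl 0 hy1) h0a h0b
  have hx2o : x2 ∈ Ioo α β := ioo_of_ne hx2 (by intro h; rw [h] at hy2; exact lt_irrefl 0 hy2) h0a h0b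
  have hsub : uIcc x1 x2 ⊆ Ioo α β := by
    intro z hz
    rw [Set.mem_uIcc] at hz
    rcases hz with ⟨h1,h2⟩|⟨h1,h2⟩ <;>
      exact ⟨by linarith [hx1o.1, hx2o.1], by linarith [hx1o.2, hx2o.2]⟩
  have h0 : (0:ℝ) ∈ uIcc (y x1) (y x2) := by
    rw [Set.mem_uIcc]; left; constructor <;> linarith
  obtain ⟨x0, hx0, hyx0⟩ := intermediate_value_uIcc
    (hc.mono (hsub.trans Set.Ioo_subset_Icc_self)) h0
  exact hne x0 (hsub hx0) hyx0

/-- On an interval between consecutive zeros: a measurable vertical slice `J` of measure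
`sSup |y|` so that every `v ∈ J` is attained as a value of `y`. -/
lemma key_interval {y : ℝ → ℝ} {α β : ℝ} (hαβ : α < β)
    (hc : ContinuousOn y (Icc α β)) (h0a : y α = 0) (h0b : y β = 0)
    (hne : ∀ x ∈ Ioo α β, y x ≠ 0) :
    ∃ J : Set ℝ, MeasurableSet J ∧
      volume J = ENNReal.ofReal (sSup ((fun x => |y x|) '' Icc α β)) ∧
      ∀ v ∈ J, ∃ x' ∈ Icc α β, y x' = v := by
  set Mn := sSup ((fun x => |y x|) '' Icc α β) with hMn
  have hcomp : IsCompact ((fun x => |y x|) '' Icc α β) :=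
    (isCompact_Icc).image_of_continuousOn (hc.abs)
  have hnemp : ((fun x => |y x|) '' Icc α β).Nonempty :=
    ⟨|y α|, ⟨α, ⟨le_refl _, le_of_lt hαβ⟩, rfl⟩⟩
  have hmem : Mn ∈ (fun x => |y x|) '' Icc α β := hcomp.sSup_mem hnemp
  obtain ⟨xs, hxs, hxsM⟩ := hmem
  rcases sign_const hc hne h0a h0b with hpos | hneg
  · refine ⟨Ioo 0 Mn, measurableSet_Ioo, by rw [Real.volume_Ioo, sub_zero], ?_⟩
    intro v hv
    have hyxs : y xs = Mn := by
      rw [← hxsM]; simp only []; rw [abs_of_nonneg (hpos xs hxs)]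
    have h0v : v ∈ uIcc (y β) (y xs) := by
      rw [h0b, hyxs, Set.mem_uIcc]; left; exact ⟨le_of_lt hv.1, le_of_lt hv.2⟩
    have hsub : uIcc β xs ⊆ Icc α β := by
      apply Set.uIcc_subset_Icc ⟨le_of_lt hαβ, le_refl _⟩ hxs
    obtain ⟨x', hx', hyx'⟩ := intermediate_value_uIcc (hc.mono hsub) h0v
    exact ⟨x', hsub hx', hyx'⟩
  · refine ⟨Ioo (-Mn) 0, measurableSet_Ioo, by rw [Real.volume_Ioo]; ring_nf, ?_⟩
    intro v hv
    have hyxs : y xs = -Mn := by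
      rw [← hxsM]; simp only []; rw [abs_of_nonpos (hneg xs hxs)]; ring
    have h0v : v ∈ uIcc (y β) (y xs) := by
      rw [h0b, hyxs, Set.mem_uIcc]; right; exact ⟨le_of_lt hv.1, le_of_lt hv.2⟩
    have hsub : uIcc β xs ⊆ Icc α β := by
      apply Set.uIcc_subset_Icc ⟨le_of_lt hαβ, le_refl _⟩ hxs
    obtain ⟨x', hx', hyx'⟩ := intermediate_value_uIcc (hc.mono hsub) h0v
    exact ⟨x', hsub hx', hyx'⟩

lemma lower_vol {T : ℝ} {y : ℝ → ℝ} (hy_cont : ContinuousOn y (Ioc 0 T))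
    {a : ℕ → ℝ} (ha_mem : ∀ n, a n ∈ Set.Ioc (0:ℝ) T) (ha_dec : StrictAnti a)
    (ha_zero : ∀ n, y (a n) = 0)
    (ha_consec : ∀ n, ∀ x ∈ Set.Ioo (a (n+1)) (a n), y x ≠ 0)
    {ε : ℝ} (hε : 0 < ε) (K : ℕ) (hgap : ∀ n, K ≤ n → |a n - a (n+1)| ≤ ε) :
    (∑' n : ℕ, if K ≤ n then
        ENNReal.ofReal (sSup ((fun x => |y x|) '' Icc (a (n+1)) (a n)) * (a n - a (n+1)))
      else 0) ≤ volume (thickening (2*ε) (_root_.graphOn y (Ioc 0 T))) := by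
  have hlt : ∀ n, a (n+1) < a n := fun n => ha_dec (Nat.lt_succ_self n)
  have hsub : ∀ n, Icc (a (n+1)) (a n) ⊆ Ioc 0 T := fun n x hx =>
    ⟨lt_of_lt_of_le (ha_mem (n+1)).1 hx.1, le_trans hx.2 (ha_mem n).2⟩
  have hcI : ∀ n, ContinuousOn y (Icc (a (n+1)) (a n)) := fun n => hy_cont.mono (hsub n)
  have hKI : ∀ n : ℕ, ∃ J : Set ℝ, MeasurableSet J ∧
      volume J = ENNReal.ofReal (sSup ((fun x => |y x|) '' Icc (a (n+1)) (a n))) ∧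
      ∀ v ∈ J, ∃ x' ∈ Icc (a (n+1)) (a n), y x' = v :=
    fun n => key_interval (hlt n) (hcI n) (ha_zero (n+1)) (ha_zero n) (ha_consec n)
  choose J hJm hJv hJl using hKI
  set S : ℕ → Set E2 := fun n =>
    if K ≤ n then {p : E2 | p 0 ∈ Ioo (a (n+1)) (a n) ∧ p 1 ∈ J n} else ∅ with hS
  have hSm : ∀ n, MeasurableSet (S n) := by
    intro n; rw [hS]; dsimp only
    split
    · exact measurable_box measurableSet_Ioo (hJm n)
    · exact MeasurableSet.empty
  have hSd' : ∀ m n, m < n → Disjoint (S m) (S n) := by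
    intro m n h
    apply Set.disjoint_left.2
    intro p hpm hpn
    rw [hS] at hpm hpn; dsimp only at hpm hpn
    split at hpm; swap; · exact hpm
    split at hpn; swap; · exact hpn
    have h1 : p 0 < a n := hpn.1.2
    have h2 : a (m+1) < p 0 := hpm.1.1
    have : a n ≤ a (m+1) := ha_dec.antitone (by omega)
    linarith
  have hSd : Pairwise (Function.onFun Disjoint S) := by
    intro m n hmn
    rcases Nat.lt_or_ge m n with h|h
    · exact hSd' m n h
    · exact (hSd' n m (by omega)).symm
  have hSsub : (⋃ n, S n) ⊆ thickening (2*ε) (graphOn y (Ioc 0 T)) := by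
    intro p hp
    obtain ⟨n, hpn⟩ := Set.mem_iUnion.1 hp
    rw [hS] at hpn; dsimp only at hpn
    split at hpn; swap; · exact absurd hpn (Set.notMem_empty p)
    rename_i hKn
    obtain ⟨hp0, hp1⟩ := hpn
    obtain ⟨x', hx', hyx'⟩ := hJl n _ hp1
    rw [mem_thickening_iff]
    refine ⟨pt x' (y x'), ⟨x', hsub n hx', rfl⟩, ?_⟩
    have hd : dist p (pt x' (y x')) = |p 0 - x'| := by
      rw [hyx']
      have : dist p (pt x' (p 1)) = dist (pt (p 0) (p 1)) (pt x' (p 1)) := by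
        rw [pt_coords]
      rw [this, dist_pt_same]
    rw [hd]
    have hgapn := hgap n hKn
    rw [abs_of_pos (by linarith [hlt n])] at hgapn
    have : |p 0 - x'| ≤ a n - a (n+1) := by
      rw [abs_le]
      constructor <;> [linarith [hp0.1, hx'.2]; linarith [hp0.2, hx'.1]]
    linarith
  have hvol : ∀ n, volume (S n) = (if K ≤ n then
      ENNReal.ofReal (sSup ((fun x => |y x|) '' Icc (a (n+1)) (a n)) * (a n - a (n+1)))
    else 0) := by
    intro n
    rw [hS]; dsimp only
    split
    · rw [volume_box _ _ measurableSet_Ioo (hJm n), Real.volume_Ioo, hJv n,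
        ← ENNReal.ofReal_mul (show (0:ℝ) ≤ a n - a (n+1) by linarith [hlt n])]
      exact congrArg ENNReal.ofReal (mul_comm _ _)
    · simp
  calc (∑' n : ℕ, if K ≤ n then
        ENNReal.ofReal (sSup ((fun x => |y x|) '' Icc (a (n+1)) (a n)) * (a n - a (n+1)))
      else 0) = ∑' n, volume (S n) := by
        congr 1; funext n; rw [hvol n]
    _ = volume (⋃ n, S n) := (measure_iUnion hSd hSm).symm
    _ ≤ _ := measure_mono hSsub

lemma osc_le {T u v x : ℝ} {y : ℝ → ℝ}
    (hy_diff : ∀ t ∈ Set.Ioc (0:ℝ) T, DifferentiableAt ℝ y t)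
    (hy_dc : ContinuousOn (deriv y) (Set.Ioc 0 T))
    (hu : 0 < u) (hvT : v ≤ T) (hux : u ≤ x) (hxv : x ≤ v) :
    |y x - y u| ≤ ∫ t in u..v, |deriv y t| := by
  have hsub : Set.Icc u v ⊆ Set.Ioc 0 T := fun t ht => ⟨lt_of_lt_of_le hu ht.1, le_trans ht.2 hvT⟩
  have hcont : ContinuousOn (deriv y) (Set.Icc u v) := hy_dc.mono hsub
  have hftc : ∫ t in u..x, deriv y t = y x - y u := by
    apply intervalIntegral.integral_deriv_eq_sub
    · intro t ht
      rw [Set.uIcc_of_le hux] at ht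
      exact hy_diff t (hsub ⟨ht.1, le_trans ht.2 hxv⟩)
    · apply ContinuousOn.intervalIntegrable
      rw [Set.uIcc_of_le hux]
      exact hcont.mono (Set.Icc_subset_Icc le_rfl hxv)
  rw [← hftc]
  calc |∫ t in u..x, deriv y t| ≤ ∫ t in u..x, |deriv y t| :=
        intervalIntegral.abs_integral_le_integral_abs hux
    _ ≤ ∫ t in u..v, |deriv y t| := by
        apply intervalIntegral.integral_mono_interval le_rfl hux hxv
        · filter_upwards with t using abs_nonneg _
        · exact (hcont.abs).intervalIntegrable_of_Icc (le_trans hux hxv)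

lemma thick_box {A : Set E2} {u v c d ε : ℝ}
    (h : ∀ z ∈ A, z 0 ∈ Icc u v ∧ z 1 ∈ Icc c d) :
    thickening ε A ⊆ {p : E2 | p 0 ∈ Ioo (u-ε) (v+ε) ∧ p 1 ∈ Ioo (c-ε) (d+ε)} := by
  intro p hp
  obtain ⟨z, hzA, hdz⟩ := mem_thickening_iff.1 hp
  have h0 := coord_le_dist p z 0
  have h1 := coord_le_dist p z 1
  rw [abs_le] at h0 h1
  obtain ⟨hz0, hz1⟩ := h z hzA
  exact ⟨⟨by linarith [hz0.1, h0.1], by linarith [hz0.2, h0.2]⟩,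
         ⟨by linarith [hz1.1, h1.1], by linarith [hz1.2, h1.2]⟩⟩

lemma vol_thick_box {A : Set E2} {u v c d ε : ℝ} (hε : 0 ≤ ε) (huv : u ≤ v) (hcd : c ≤ d)
    (h : ∀ z ∈ A, z 0 ∈ Icc u v ∧ z 1 ∈ Icc c d) :
    volume (thickening ε A) ≤ ENNReal.ofReal ((v - u + 2*ε) * (d - c + 2*ε)) := by
  calc volume (thickening ε A)
      ≤ volume {p : E2 | p 0 ∈ Ioo (u-ε) (v+ε) ∧ p 1 ∈ Ioo (c-ε) (d+ε)} :=
        measure_mono (thick_box h)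
    _ = ENNReal.ofReal (v + ε - (u - ε)) * ENNReal.ofReal (d + ε - (c - ε)) := by
        rw [volume_box _ _ measurableSet_Ioo measurableSet_Ioo, Real.volume_Ioo, Real.volume_Ioo]
    _ ≤ _ := by
        rw [← ENNReal.ofReal_mul (by linarith)]
        apply ENNReal.ofReal_le_ofReal
        apply le_of_eq; ring_nf

lemma upper_vol_tail {T : ℝ} {y : ℝ → ℝ}
    (hy_diff : ∀ t ∈ Set.Ioc (0:ℝ) T, DifferentiableAt ℝ y t)
    (hy_dc : ContinuousOn (deriv y) (Set.Ioc 0 T))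
    {b : ℝ} (hb0 : 0 < b) (hbT : b ≤ T) {ε : ℝ} (hε : 0 < ε) :
    volume (thickening ε (_root_.graphOn y (Icc b T))) ≤
      ENNReal.ofReal (6*ε*((∫ t in b..T, |deriv y t|) + (T - b) + 2*ε)) := by
  set N : ℕ := ⌈(T-b)/ε⌉₊ + 1 with hN
  have hN0 : 0 < (N:ℝ) := by positivity
  set Δ : ℝ := (T-b)/N with hΔ
  have hTb : 0 ≤ T - b := by linarith
  have hΔ0 : 0 ≤ Δ := by positivity
  have hΔε : Δ ≤ ε := by
    rw [hΔ, div_le_iff₀ hN0]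
    have h1 : (T-b)/ε ≤ (⌈(T-b)/ε⌉₊ : ℝ) := Nat.le_ceil _
    have h2 : ((⌈(T-b)/ε⌉₊ : ℝ)) ≤ N := by rw [hN]; push_cast; linarith
    calc T - b = ((T-b)/ε) * ε := by field_simp
      _ ≤ (N:ℝ) * ε := by
          apply mul_le_mul_of_nonneg_right (le_trans h1 h2) (le_of_lt hε)
      _ = ε * N := mul_comm _ _
  set xp : ℕ → ℝ := fun i => b + i * Δ with hxp
  have hxpN : xp N = T := by
    rw [hxp]; dsimp only; rw [hΔ]; field_simp; ring
  have hxp_mono : ∀ i j : ℕ, i ≤ j → xp i ≤ xp j := by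
    intro i j hij
    rw [hxp]; dsimp only
    have : (i:ℝ) ≤ j := by exact_mod_cast hij
    nlinarith
  have hxp_mem : ∀ i, i ≤ N → xp i ∈ Icc b T := by
    intro i hi
    constructor
    · rw [hxp]; dsimp only; nlinarith [Nat.cast_nonneg (α := ℝ) i]
    · rw [← hxpN]; exact hxp_mono i N hi
  have hcont_abs : ContinuousOn (fun t => |deriv y t|) (Icc b T) :=
    (hy_dc.mono (fun t ht => ⟨lt_of_lt_of_le hb0 ht.1, ht.2⟩)).abs
  -- covering
  have hcover : _root_.graphOn y (Icc b T) ⊆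
      ⋃ i ∈ Finset.range N, _root_.graphOn y (Icc (xp i) (xp (i+1))) := by
    rintro - ⟨x, hx, rfl⟩
    have : ∃ i, i < N ∧ x ∈ Icc (xp i) (xp (i+1)) := by
      rcases eq_or_lt_of_le hΔ0 with h0|h0
      · -- Δ = 0, so T = b and x = b
        have hTb' : T = b := by
          have : (T - b) = Δ * N := by rw [hΔ]; field_simp
          rw [← h0] at this; simp at this; linarith
        refine ⟨0, Nat.succ_pos _, ?_⟩
        have hxb : x = b := le_antisymm (hTb' ▸ hx.2) hx.1
        constructor
        · rw [hxp]; simp [hxb]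
        · rw [hxp]; dsimp only; rw [← h0]; simp [hxb]
      · set i0 := ⌊(x - b)/Δ⌋₊ with hi0
        have hxb0 : 0 ≤ (x - b)/Δ := by
          apply div_nonneg _ hΔ0; linarith [hx.1]
        rcases Nat.lt_or_ge i0 N with hiN|hiN
        · refine ⟨i0, hiN, ?_, ?_⟩
          · rw [hxp]; dsimp only
            have h1 : (i0:ℝ) ≤ (x - b)/Δ := by rw [hi0]; exact Nat.floor_le hxb0
            have h2 : (i0:ℝ) * Δ ≤ x - b := (le_div_iff₀ h0).mp h1
            linarith
          · rw [hxp]; dsimp only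
            have h1 : (x - b)/Δ < (i0:ℝ) + 1 := by
              rw [hi0]; exact_mod_cast Nat.lt_floor_add_one ((x - b)/Δ)
            have h2 : x - b < ((i0:ℝ) + 1) * Δ := (div_lt_iff₀ h0).mp h1
            push_cast
            linarith
        · refine ⟨N - 1, by omega, ?_, ?_⟩
          · have hxT : x = T := by
              have h1 : (N:ℝ) ≤ i0 := by exact_mod_cast hiN
              have h2 : (i0:ℝ) ≤ (x - b)/Δ := by
                rw [hi0]; exact Nat.floor_le hxb0
              have : (N:ℝ) * Δ ≤ x - b := by
                rw [← le_div_iff₀ h0]; linarith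
              have hNΔ : (N:ℝ) * Δ = T - b := by rw [hΔ]; field_simp
              rw [hNΔ] at this
              linarith [hx.2]
            rw [hxT, ← hxpN]
            exact hxp_mono _ _ (by omega)
          · have : N - 1 + 1 = N := by omega
            rw [this, hxpN]; exact hx.2
    obtain ⟨i, hiN, hxi⟩ := this
    apply Set.mem_biUnion (Finset.mem_range.2 hiN)
    exact ⟨x, hxi, rfl⟩
  -- integrability on pieces
  have hsubBT : ∀ i, i < N → Icc (xp i) (xp (i+1)) ⊆ Icc b T := by
    intro i hi t ht
    exact ⟨le_trans (hxp_mem i (by omega)).1 ht.1, le_trans ht.2 (hxp_mem (i+1) (by omega)).2⟩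
  have hint : ∀ i, i < N → IntervalIntegrable (fun t => |deriv y t|) volume (xp i) (xp (i+1)) := by
    intro i hi
    apply ContinuousOn.intervalIntegrable
    rw [Set.uIcc_of_le (hxp_mono i (i+1) (by omega))]
    exact hcont_abs.mono (hsubBT i hi)
  set o : ℕ → ℝ := fun i => ∫ t in (xp i)..(xp (i+1)), |deriv y t| with ho
  have ho0 : ∀ i, i < N → 0 ≤ o i := by
    intro i hi
    apply intervalIntegral.integral_nonneg (hxp_mono i (i+1) (by omega))
    intro t _; exact abs_nonneg _
  -- per-piece bound
  have hpiece : ∀ i, i < N →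
      volume (thickening ε (_root_.graphOn y (Icc (xp i) (xp (i+1))))) ≤
        ENNReal.ofReal (6*ε*(o i) + 6*ε^2) := by
    intro i hi
    have hxi := hxp_mem i (by omega)
    have hxi1 := hxp_mem (i+1) (by omega)
    have hii1 : xp i ≤ xp (i+1) := hxp_mono i (i+1) (by omega)
    have hbd : ∀ z ∈ _root_.graphOn y (Icc (xp i) (xp (i+1))),
        z 0 ∈ Icc (xp i) (xp (i+1)) ∧ z 1 ∈ Icc (y (xp i) - o i) (y (xp i) + o i) := by
      rintro - ⟨x, hx, rfl⟩
      refine ⟨hx, ?_⟩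
      show y x ∈ Icc (y (xp i) - o i) (y (xp i) + o i)
      have := osc_le hy_diff hy_dc (lt_of_lt_of_le hb0 hxi.1) hxi1.2 hx.1 hx.2
      rw [abs_le] at this
      constructor <;> linarith [this.1, this.2]
    calc volume (thickening ε (_root_.graphOn y (Icc (xp i) (xp (i+1)))))
        ≤ ENNReal.ofReal ((xp (i+1) - xp i + 2*ε) * ((y (xp i) + o i) - (y (xp i) - o i) + 2*ε)) :=
          vol_thick_box (le_of_lt hε) hii1 (by linarith [ho0 i hi]) hbd
      _ ≤ ENNReal.ofReal (6*ε*(o i) + 6*ε^2) := by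
          apply ENNReal.ofReal_le_ofReal
          have hxx : xp (i+1) - xp i = Δ := by rw [hxp]; push_cast; ring
          rw [hxx]
          nlinarith [ho0 i hi, hΔε, hΔ0, hε]
  -- assemble
  have hsum : ∑ i ∈ Finset.range N, o i = ∫ t in b..T, |deriv y t| := by
    have := intervalIntegral.sum_integral_adjacent_intervals
      (f := fun t => |deriv y t|) (a := xp) (μ := volume) (n := N) (fun i hi => hint i hi)
    rw [show xp 0 = b by rw [hxp]; simp, hxpN] at this
    exact this
  calc volume (thickening ε (_root_.graphOn y (Icc b T)))
      ≤ volume (⋃ i ∈ Finset.range N, thickening ε (_root_.graphOn y (Icc (xp i) (xp (i+1))))) := by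
        apply measure_mono
        intro p hp
        obtain ⟨z, hz, hdz⟩ := mem_thickening_iff.1 hp
        obtain ⟨i, hi, hzi⟩ := Set.mem_iUnion₂.1 (hcover hz)
        exact Set.mem_biUnion hi (mem_thickening_iff.2 ⟨z, hzi, hdz⟩)
    _ ≤ ∑ i ∈ Finset.range N, volume (thickening ε (_root_.graphOn y (Icc (xp i) (xp (i+1))))) :=
        measure_biUnion_finset_le _ _
    _ ≤ ∑ i ∈ Finset.range N, ENNReal.ofReal (6*ε*(o i) + 6*ε^2) := by
        apply Finset.sum_le_sum
        intro i hi
        exact hpiece i (Finset.mem_range.1 hi)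
    _ = ENNReal.ofReal (∑ i ∈ Finset.range N, (6*ε*(o i) + 6*ε^2)) :=
        (ENNReal.ofReal_sum_of_nonneg (fun i hi => by
          have h' := ho0 i (Finset.mem_range.1 hi); positivity)).symm
    _ ≤ _ := by
        apply ENNReal.ofReal_le_ofReal
        rw [Finset.sum_add_distrib, ← Finset.mul_sum, Finset.sum_const, Finset.card_range,
          hsum, nsmul_eq_mul]
        have hNle : (N:ℝ) ≤ (T-b)/ε + 2 := by
          rw [hN]; push_cast
          have := Nat.ceil_lt_add_one (by positivity : (0:ℝ) ≤ (T-b)/ε)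
          linarith
        have hNe : (N:ℝ)*ε ≤ (T - b) + 2*ε := by
          calc (N:ℝ)*ε ≤ ((T-b)/ε + 2)*ε := by nlinarith
            _ = (T-b) + 2*ε := by
              rw [add_mul, div_mul_cancel₀ _ (ne_of_gt hε)]
        have h6 : (0:ℝ) ≤ 6*ε := by positivity
        nlinarith [mul_le_mul_of_nonneg_left hNe h6]

lemma tendsto_log_one_div : Tendsto (fun δ : ℝ => Real.log (1/δ)) (𝓝[>](0:ℝ)) atTop :=
  Real.tendsto_log_atTop.comp
    ((tendsto_inv_nhdsGT_zero (𝕜 := ℝ)).congr (fun x => (one_div x).symm))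

lemma tendsto_log_pow_atTop {l : ℕ} (hl : 1 ≤ l) :
    Tendsto (fun δ : ℝ => Real.log (1/δ)^l) (𝓝[>](0:ℝ)) atTop :=
  (tendsto_pow_atTop (by omega)).comp tendsto_log_one_div

lemma tendsto_rpow_log_pow {c : ℝ} (hc : 0 < c) {l : ℕ} (hl : 1 ≤ l) :
    Tendsto (fun δ : ℝ => δ^c * Real.log (1/δ)^l) (𝓝[>](0:ℝ)) (𝓝 0) := by
  have hl0 : (l:ℝ) ≠ 0 := by positivity
  have key : Tendsto (fun δ : ℝ => (-(Real.log δ * δ^(c/(l:ℝ))))^l) (𝓝[>](0:ℝ)) (𝓝 0) := by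
    have h1 : Tendsto (fun δ : ℝ => -(Real.log δ * δ^(c/(l:ℝ)))) (𝓝[>](0:ℝ)) (𝓝 0) := by
      simpa using (tendsto_log_mul_rpow_nhdsGT_zero (by positivity : 0 < c/(l:ℝ))).neg
    simpa [zero_pow (by omega : l ≠ 0)] using h1.pow l
  apply key.congr'
  filter_upwards [self_mem_nhdsWithin] with δ (hδ : 0 < δ)
  have e1 : (δ^(c/(l:ℝ)))^l = δ^c := by
    rw [← Real.rpow_natCast (δ^(c/(l:ℝ))) l, ← Real.rpow_mul (le_of_lt hδ),
      div_mul_cancel₀ _ hl0]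
  have e2 : -Real.log δ = Real.log (1/δ) := by rw [← Real.log_inv, one_div]
  calc (-(Real.log δ * δ^(c/(l:ℝ))))^l = (δ^(c/(l:ℝ)))^l * (-Real.log δ)^l := by
        rw [← mul_pow]; congr 1; ring
    _ = δ^c * Real.log (1/δ)^l := by rw [e1, e2]

set_option maxHeartbeats 2000000 in
/-- **Modification of Theorem 2.1 from [mersat]**: criterion, in terms of a decreasing sequence
of consecutive zeros `(a_n)` of `y` and an index function `k(ε)`, for the graph of a bounded
`C¹` function `y` on `(0,T]` to have box dimension `s` and be Minkowski degenerate with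
`M^s(G(y)) = ∞`. -/
theorem graph_dimension_from_zeros
    (T : ℝ) (hT : 0 < T) (y : ℝ → ℝ) (s : ℝ) (hs1 : 1 ≤ s) (hs2 : s < 2) (l : ℕ) (hl : 1 ≤ l)
    -- y ∈ C¹((0,T]), bounded on (0,T]
    (hy_diff : ∀ x ∈ Set.Ioc (0:ℝ) T, DifferentiableAt ℝ y x)
    (hy_deriv_cont : ContinuousOn (deriv y) (Set.Ioc 0 T))
    (hy_bdd : ∃ M : ℝ, ∀ x ∈ Set.Ioc (0:ℝ) T, |y x| ≤ M)
    -- (a_n) is a decreasing sequence of consecutive zeros of y in (0,T], tending to 0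
    (a : ℕ → ℝ)
    (ha_mem : ∀ n, a n ∈ Set.Ioc (0:ℝ) T)
    (ha_dec : StrictAnti a)
    (ha_zero : ∀ n, y (a n) = 0)
    (ha_consec : ∀ n, ∀ x ∈ Set.Ioo (a (n+1)) (a n), y x ≠ 0)
    (ha_lim : Tendsto a atTop (𝓝 0))
    -- the constants and the index function
    (c₁ c₂ ε₀ : ℝ) (hc₁ : 0 < c₁) (hc₂ : 0 < c₂) (hε₀ : 0 < ε₀)
    (k : ℝ → ℕ)
    (hk_anti : AntitoneOn k (Set.Ioc 0 ε₀))
    (hk_lim : Tendsto k (𝓝[>] (0:ℝ)) atTop)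
    (hk_gap : ∀ ε ∈ Set.Ioo (0:ℝ) ε₀, ∀ n, k ε ≤ n → |a n - a (n+1)| ≤ ε)
    -- assumption (1)
    (h1 : ∀ ε ∈ Set.Ioo (0:ℝ) ε₀,
      ENNReal.ofReal (c₁ * ε ^ (2-s) * Real.log (1/ε) ^ l) ≤
        ∑' n : ℕ, if k ε ≤ n then
          ENNReal.ofReal (sSup ((fun x => |y x|) '' Set.Icc (a (n+1)) (a n)) * (a n - a (n+1)))
        else 0)
    -- assumption (2)
    (h2 : ∀ ε ∈ Set.Ioo (0:ℝ) ε₀,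
      a (k ε) * sSup ((fun x => |y x|) '' Set.Ioc 0 (a (k ε))) +
          ε * ∫ x in (a (k ε))..(a 0), |deriv y x| ≤
        c₂ * ε ^ (2-s) * Real.log (1/ε) ^ l) :
    dimBEq (graphOn y (Set.Ioc 0 T)) s ∧
    lowerMink s (graphOn y (Set.Ioc 0 T)) = ⊤ ∧
    upperMink s (graphOn y (Set.Ioc 0 T)) = ⊤ := by
  have hy_cont : ContinuousOn y (Set.Ioc 0 T) := fun x hx =>
    ((hy_diff x hx).continuousAt).continuousWithinAt
  obtain ⟨M, hM⟩ := hy_bdd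
  have hM0 : 0 ≤ M := le_trans (abs_nonneg _) (hM (a 0) (ha_mem 0))
  set G := _root_.graphOn y (Set.Ioc 0 T) with hG
  -- ====== LOWER VOLUME BOUND ======
  have hLB : ∀ δ : ℝ, 0 < δ → δ < 2*ε₀ →
      ENNReal.ofReal (c₁ * (δ/2)^(2-s) * Real.log (1/(δ/2))^l) ≤
        volume (thickening δ G) := by
    intro δ hδ0 hδε
    have hε : δ/2 ∈ Set.Ioo (0:ℝ) ε₀ := ⟨by linarith, by linarith⟩
    calc ENNReal.ofReal (c₁ * (δ/2)^(2-s) * Real.log (1/(δ/2))^l) ≤ _ := h1 (δ/2) hε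
      _ ≤ volume (thickening (2*(δ/2)) G) := lower_vol hy_cont ha_mem ha_dec ha_zero ha_consec
            (by linarith) (k (δ/2)) (fun n hn => hk_gap (δ/2) hε n hn)
      _ = volume (thickening δ G) := by rw [show 2*(δ/2) = δ by ring]
  -- ====== MINKOWSKI CONTENT = ⊤ for t ≤ s ======
  have hgtop : Tendsto (fun δ : ℝ => ENNReal.ofReal ((c₁ * 2^(s-2)) * Real.log (1/(δ/2))^l))
      (𝓝[>](0:ℝ)) (𝓝 ⊤) := by
    apply ENNReal.tendsto_ofReal_atTop.comp
    apply Filter.Tendsto.const_mul_atTop (by positivity : (0:ℝ) < c₁ * 2^(s-2))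
    have hhalf : Tendsto (fun δ : ℝ => δ/2) (𝓝[>](0:ℝ)) (𝓝[>](0:ℝ)) := by
      rw [tendsto_nhdsWithin_iff]
      constructor
      · have : Tendsto (fun δ : ℝ => δ/2) (𝓝 (0:ℝ)) (𝓝 (0/2)) := (tendsto_id).div_const 2
        rw [zero_div] at this
        exact this.mono_left nhdsWithin_le_nhds
      · filter_upwards [self_mem_nhdsWithin] with δ (hδ : 0 < δ)
        exact half_pos hδ
    exact (tendsto_log_pow_atTop hl).comp hhalf
  have hbnd : ∀ t : ℝ, t ≤ s → ∀ᶠ δ in 𝓝[>](0:ℝ),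
      ENNReal.ofReal ((c₁ * 2^(s-2)) * Real.log (1/(δ/2))^l) ≤
        volume (thickening δ G) / ENNReal.ofReal (δ ^ (2 - t)) := by
    intro t ht
    have hmem : Set.Ioo (0:ℝ) (min 1 (2*ε₀)) ∈ 𝓝[>](0:ℝ) :=
      Ioo_mem_nhdsGT_of_mem ⟨le_rfl, lt_min one_pos (by linarith)⟩
    filter_upwards [hmem] with δ hδ
    obtain ⟨hδ0, hδm⟩ := hδ
    have hδ1 : δ < 1 := lt_of_lt_of_le hδm (min_le_left _ _)
    have hδε : δ < 2*ε₀ := lt_of_lt_of_le hδm (min_le_right _ _)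
    have hB0 : ENNReal.ofReal (δ^(2-t)) ≠ 0 := by
      rw [Ne, ENNReal.ofReal_eq_zero, not_le]
      exact Real.rpow_pos_of_pos hδ0 _
    rw [ENNReal.le_div_iff_mul_le (Or.inl hB0) (Or.inl ENNReal.ofReal_ne_top)]
    have hL0 : 0 ≤ Real.log (1/(δ/2)) :=
      Real.log_nonneg (one_le_one_div (by linarith) (by linarith))
    have hL0' : 0 ≤ Real.log (1/(δ/2))^l := pow_nonneg hL0 l
    rw [← ENNReal.ofReal_mul (by positivity)]
    refine le_trans (ENNReal.ofReal_le_ofReal ?_) (hLB δ hδ0 hδε)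
    have e : (δ/2)^(2-s) = δ^(2-s) * 2^(s-2) := by
      rw [Real.div_rpow (le_of_lt hδ0) (by norm_num : (0:ℝ) ≤ 2),
        show (2:ℝ)^(s-2) = ((2:ℝ)^(2-s))⁻¹ by
          rw [← Real.rpow_neg (by norm_num : (0:ℝ) ≤ 2), neg_sub],
        div_eq_mul_inv]
    have hmono : δ^(2-t) ≤ δ^(2-s) :=
      Real.rpow_le_rpow_of_exponent_ge hδ0 (le_of_lt hδ1) (by linarith)
    rw [e]
    have hcoef : (0:ℝ) ≤ c₁ * 2^(s-2) * Real.log (1/(δ/2))^l := by positivity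
    nlinarith [mul_le_mul_of_nonneg_left hmono hcoef]
  have hMinkTopLower : ∀ t : ℝ, t ≤ s → lowerMink t G = ⊤ := by
    intro t ht
    have h1' := Filter.liminf_le_liminf (hbnd t ht)
    rw [hgtop.liminf_eq] at h1'
    exact top_le_iff.1 h1'
  have hMinkTopUpper : ∀ t : ℝ, t ≤ s → upperMink t G = ⊤ := by
    intro t ht
    have h1' := Filter.limsup_le_limsup (hbnd t ht)
    rw [hgtop.limsup_eq] at h1'
    exact top_le_iff.1 h1'
  -- ====== UPPER VOLUME BOUND ======
  set C0 : ℝ := ∫ t in (a 0)..T, |deriv y t| with hC0def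
  have ha0T : a 0 ≤ T := (ha_mem 0).2
  have ha00 : 0 < a 0 := (ha_mem 0).1
  have hC0 : 0 ≤ C0 := intervalIntegral.integral_nonneg ha0T (fun t _ => abs_nonneg _)
  set C : ℝ := (2*c₂ + 2*T + 4*M + 4) + 6*(c₂ + C0 + T + 2) with hCdef
  have hCpos : 0 < C := by positivity
  set m0 : ℝ := min ε₀ (Real.exp (-1)) with hm0
  have hm0pos : 0 < m0 := lt_min hε₀ (Real.exp_pos _)
  have hUB : ∀ δ : ℝ, δ ∈ Set.Ioo (0:ℝ) m0 →
      volume (thickening δ G) ≤ ENNReal.ofReal (C * (δ^(2-s) * Real.log (1/δ)^l)) := by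
    rintro δ ⟨hδ0, hδm⟩
    have hδε₀ : δ < ε₀ := lt_of_lt_of_le hδm (min_le_left _ _)
    have hδe : δ ≤ Real.exp (-1) := le_of_lt (lt_of_lt_of_le hδm (min_le_right _ _))
    have hδ1 : δ < 1 := lt_of_le_of_lt hδe (by
      rw [show (1:ℝ) = Real.exp 0 by rw [Real.exp_zero]]
      exact Real.exp_lt_exp.2 (by norm_num))
    have hlog1 : 1 ≤ Real.log (1/δ) := by
      rw [one_div, Real.log_inv]
      have h' : Real.log δ ≤ Real.log (Real.exp (-1)) := Real.log_le_log hδ0 hδe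
      rw [Real.log_exp] at h'
      linarith
    set L : ℝ := Real.log (1/δ)^l with hLdef
    have hL1 : 1 ≤ L := one_le_pow₀ hlog1
    have hL0 : 0 ≤ L := by linarith
    have hδ2s0 : 0 < δ^(2-s) := Real.rpow_pos_of_pos hδ0 _
    have hδ2s : δ ≤ δ^(2-s) := by
      nth_rewrite 1 [← Real.rpow_one δ]
      exact Real.rpow_le_rpow_of_exponent_ge hδ0 (le_of_lt hδ1) (by linarith)
    have hX : δ ≤ δ^(2-s) * L := le_trans hδ2s (by nlinarith)
    set b := a (k δ) with hbdef
    have hb0 : 0 < b := (ha_mem _).1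
    have hbT : b ≤ T := (ha_mem _).2
    have hba0 : b ≤ a 0 := ha_dec.antitone (Nat.zero_le _)
    set S : ℝ := sSup ((fun x => |y x|) '' Set.Ioc 0 b) with hSdef
    have hbdd : BddAbove ((fun x => |y x|) '' Set.Ioc 0 b) := by
      refine ⟨M, ?_⟩
      rintro v ⟨x, hx, rfl⟩
      exact hM x ⟨hx.1, le_trans hx.2 hbT⟩
    have hS_ub : ∀ x ∈ Set.Ioc (0:ℝ) b, |y x| ≤ S := fun x hx => le_csSup hbdd ⟨x, hx, rfl⟩
    have hS0 : 0 ≤ S := le_trans (abs_nonneg _) (hS_ub b ⟨hb0, le_rfl⟩)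
    have hSM : S ≤ M := csSup_le ⟨|y b|, ⟨b, ⟨hb0, le_rfl⟩, rfl⟩⟩
      (by rintro v ⟨x, hx, rfl⟩; exact hM x ⟨hx.1, le_trans hx.2 hbT⟩)
    have h2' := h2 δ ⟨hδ0, hδε₀⟩
    rw [← hbdef, ← hSdef, ← hLdef] at h2'
    -- integrability pieces
    have hIab : IntervalIntegrable (fun t => |deriv y t|) volume b (a 0) := by
      apply ContinuousOn.intervalIntegrable
      rw [Set.uIcc_of_le hba0]
      exact (hy_deriv_cont.mono (fun x hx => ⟨lt_of_lt_of_le hb0 hx.1,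
        le_trans hx.2 ha0T⟩)).abs
    have hIa0T : IntervalIntegrable (fun t => |deriv y t|) volume (a 0) T := by
      apply ContinuousOn.intervalIntegrable
      rw [Set.uIcc_of_le ha0T]
      exact (hy_deriv_cont.mono (fun x hx => ⟨lt_of_lt_of_le ha00 hx.1, hx.2⟩)).abs
    set I1 : ℝ := ∫ x in b..(a 0), |deriv y x| with hI1def
    have hInn : 0 ≤ I1 := intervalIntegral.integral_nonneg hba0 (fun t _ => abs_nonneg _)
    have hbS : b * S ≤ c₂ * δ^(2-s) * L := by nlinarith
    have hI1 : δ * I1 ≤ c₂ * δ^(2-s) * L := by nlinarith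
    have hsplit : Set.Ioc (0:ℝ) T = Set.Ioc 0 b ∪ Set.Icc b T :=
      (Set.Ioc_union_Icc_eq_Ioc hb0 hbT).symm
    have hbd1 : ∀ z ∈ _root_.graphOn y (Set.Ioc 0 b),
        z 0 ∈ Set.Icc 0 b ∧ z 1 ∈ Set.Icc (-S) S := by
      rintro - ⟨x, hx, rfl⟩
      refine ⟨⟨le_of_lt hx.1, hx.2⟩, ?_⟩
      show y x ∈ Set.Icc (-S) S
      rw [Set.mem_Icc, ← abs_le]
      exact hS_ub x hx
    have hvol1 : volume (thickening δ (_root_.graphOn y (Set.Ioc 0 b))) ≤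
        ENNReal.ofReal ((b - 0 + 2*δ) * (S - (-S) + 2*δ)) :=
      vol_thick_box (le_of_lt hδ0) (by linarith) (by linarith) hbd1
    have hvol2 := upper_vol_tail hy_diff hy_deriv_cont hb0 hbT hδ0
    have hsplitI : (∫ t in b..T, |deriv y t|) = I1 + C0 :=
      (intervalIntegral.integral_add_adjacent_intervals hIab hIa0T).symm
    calc volume (thickening δ G)
        ≤ volume (thickening δ (_root_.graphOn y (Set.Ioc 0 b))) +
            volume (thickening δ (_root_.graphOn y (Set.Icc b T))) := by
          rw [hG, hsplit]
          rw [show _root_.graphOn y (Set.Ioc 0 b ∪ Set.Icc b T) =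
              _root_.graphOn y (Set.Ioc 0 b) ∪ _root_.graphOn y (Set.Icc b T) from
            Set.image_union _ _ _, Metric.thickening_union]
          exact measure_union_le _ _
      _ ≤ ENNReal.ofReal ((b - 0 + 2*δ) * (S - (-S) + 2*δ)) +
            ENNReal.ofReal (6*δ*((∫ t in b..T, |deriv y t|) + (T - b) + 2*δ)) :=
          add_le_add hvol1 hvol2
      _ = ENNReal.ofReal ((b - 0 + 2*δ) * (S - (-S) + 2*δ) +
            6*δ*((∫ t in b..T, |deriv y t|) + (T - b) + 2*δ)) := by
          rw [← ENNReal.ofReal_add (by nlinarith) (by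
            rw [hsplitI]; nlinarith)]
      _ ≤ ENNReal.ofReal (C * (δ^(2-s) * L)) := by
          apply ENNReal.ofReal_le_ofReal
          rw [hsplitI, hCdef]
          have p1 : δ*b ≤ δ^(2-s)*L*T := by nlinarith
          have p2 : δ*S ≤ δ^(2-s)*L*M := by nlinarith
          have p3 : δ*δ ≤ δ^(2-s)*L := by nlinarith
          have p4 : δ*C0 ≤ δ^(2-s)*L*C0 := by nlinarith
          have p5 : δ*(T-b) ≤ δ^(2-s)*L*T := by nlinarith
          nlinarith
  -- ====== MINKOWSKI CONTENT = 0 for t > s ======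
  have hMinkZero : ∀ t : ℝ, s < t →
      (Filter.limsup (fun δ : ℝ => volume (thickening δ G) / ENNReal.ofReal (δ ^ (2 - t)))
        (𝓝[>](0:ℝ)) = 0 ∧
       Filter.liminf (fun δ : ℝ => volume (thickening δ G) / ENNReal.ofReal (δ ^ (2 - t)))
        (𝓝[>](0:ℝ)) = 0) := by
    intro t ht
    have hev : ∀ᶠ δ in 𝓝[>](0:ℝ),
        volume (thickening δ G) / ENNReal.ofReal (δ ^ (2 - t)) ≤
          ENNReal.ofReal (C * (δ^(t-s) * Real.log (1/δ)^l)) := by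
      filter_upwards [Ioo_mem_nhdsGT_of_mem ⟨le_rfl, hm0pos⟩] with δ hδ
      apply ENNReal.div_le_of_le_mul
      have hδ0 := hδ.1
      have hδ1 : δ < 1 := lt_of_lt_of_le hδ.2 (le_trans (min_le_right _ _)
        (le_of_lt (by rw [show (1:ℝ) = Real.exp 0 by rw [Real.exp_zero]]
                      exact Real.exp_lt_exp.2 (by norm_num))))
      have hL0 : (0:ℝ) ≤ Real.log (1/δ)^l :=
        pow_nonneg (Real.log_nonneg (one_le_one_div hδ0 (le_of_lt hδ1))) l
      have hrw : C * (δ^(2-s) * Real.log (1/δ)^l) =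
          (C * (δ^(t-s) * Real.log (1/δ)^l)) * δ^(2-t) := by
        rw [show δ^(2-s) = δ^(t-s) * δ^(2-t) by
          rw [← Real.rpow_add hδ0]; ring_nf]
        ring
      calc volume (thickening δ G) ≤ ENNReal.ofReal (C * (δ^(2-s) * Real.log (1/δ)^l)) :=
            hUB δ hδ
        _ = ENNReal.ofReal (C * (δ^(t-s) * Real.log (1/δ)^l)) * ENNReal.ofReal (δ^(2-t)) := by
            rw [hrw, ENNReal.ofReal_mul (by positivity)]
    have hten : Tendsto (fun δ : ℝ => ENNReal.ofReal (C * (δ^(t-s) * Real.log (1/δ)^l)))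
        (𝓝[>](0:ℝ)) (𝓝 0) := by
      have hreal : Tendsto (fun δ : ℝ => C * (δ^(t-s) * Real.log (1/δ)^l))
          (𝓝[>](0:ℝ)) (𝓝 (C * 0)) :=
        (tendsto_rpow_log_pow (by linarith) hl).const_mul C
      rw [mul_zero] at hreal
      have := ENNReal.tendsto_ofReal hreal
      simpa using this
    constructor
    · have h1' := Filter.limsup_le_limsup hev
      rw [hten.limsup_eq] at h1'
      exact le_antisymm h1' zero_le
    · have h1' := Filter.liminf_le_liminf hev
      rw [hten.liminf_eq] at h1'
      exact le_antisymm h1' zero_le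
  -- ====== ASSEMBLE ======
  have hLowerSet : {t : ℝ | 0 ≤ t ∧ lowerMink t G = 0} = Set.Ioi s := by
    ext t
    simp only [Set.mem_setOf_eq, Set.mem_Ioi]
    constructor
    · rintro ⟨ht0, ht⟩
      by_contra h
      push_neg at h
      rw [hMinkTopLower t h] at ht
      exact ENNReal.top_ne_zero ht
    · intro h
      exact ⟨by linarith, (hMinkZero t h).2⟩
  have hUpperSet : {t : ℝ | 0 ≤ t ∧ upperMink t G = 0} = Set.Ioi s := by
    ext t
    simp only [Set.mem_setOf_eq, Set.mem_Ioi]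
    constructor
    · rintro ⟨ht0, ht⟩
      by_contra h
      push_neg at h
      rw [hMinkTopUpper t h] at ht
      exact ENNReal.top_ne_zero ht
    · intro h
      exact ⟨by linarith, (hMinkZero t h).1⟩
  refine ⟨⟨?_, ?_⟩, hMinkTopLower s le_rfl, hMinkTopUpper s le_rfl⟩
  · rw [lowerDimB, hLowerSet]
    exact csInf_Ioi
  · rw [upperDimB, hUpperSet]
    exact csInf_Ioi
end
end

section
/- Let Γ be a bounded simple smooth curve in ℝ², i.e. Γ is the image of a continuously differentiable injection h : [φ₁,∞) → ℝ², and assume the lower box dimension of Γ is strictly greater than 1. Let φ̄₁ > φ₁ and Γ₁ := h((φ̄₁,∞)). Then the lower box dimension d̲ and upper box dimension d̄ of Γ₁ equal those of Γ, and M_*^{d̲}(Γ₁) = M_*^{d̲}(Γ) and M^{*d̄}(Γ₁) = M^{*d̄}(Γ). The analogous statement holds for the radial box dimensions and radial Minkowski contents: if the lower radial box dimension of Γ exceeds 1, then the lower and upper radial box dimensions of Γ₁ equal those of Γ, and the corresponding lower and upper radial Minkowski contents of Γ₁ and Γ coincide. -/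
open MeasureTheory Filter Metric Set Topology ENNReal

noncomputable section

/-! The initial arc `K = h [φ₁, ov_φ₁]` is a Lipschitz image of a compact interval, hence is
covered by `O(1/ε)` balls of radius `O(ε)`, and `|K_ε| = O(ε)`. From `Γ₁ ⊆ Γ = Γ₁ ∪ K` we get
`|Γ₁_ε| ≤ |Γ_ε| ≤ |Γ₁_ε| + |K_ε|`, so for every `s > 1` the Minkowski ratios of `Γ` and `Γ₁`
differ by `O(ε^(s-1)) → 0` and their `s`-dimensional contents agree. Both box dimensions of `Γ`
exceed `1` (the upper one is at least the lower one because `Γ` is bounded), and vanishing of a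
content is monotone in `s`, so the sets of `s` where the contents vanish, hence the dimensions,
agree as well. Radial neighbourhoods satisfy the same inequalities since `rayNbhd ε A ⊆ A_ε`. -/

lemma sInf_setOf_nonneg_eq_of_agree_above {P Q : ℝ → Prop} {a : ℝ} (ha : 0 ≤ a)
    (hP : Monotone P) (hQ : Monotone Q) (hPQ : ∀ s, a < s → (P s ↔ Q s))
    (hlt : a < sInf {s | 0 ≤ s ∧ P s}) :
    sInf {s | 0 ≤ s ∧ Q s} = sInf {s | 0 ≤ s ∧ P s} := by
  obtain ⟨b, hab, hbdim⟩ := exists_between hlt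
  have hPb : ¬ P b := fun hb =>
    (csInf_le (s := {s | 0 ≤ s ∧ P s}) ⟨0, fun _ hs => hs.1⟩ ⟨ha.trans hab.le, hb⟩).not_gt hbdim
  suffices P = Q by rw [this]
  funext s
  by_cases hs : a < s
  · exact propext (hPQ s hs)
  · have hsb : s ≤ b := by linarith
    exact propext ⟨fun h => absurd (hP hsb h) hPb,
      fun h => absurd ((hPQ b hab).2 (hQ hsb h)) hPb⟩

namespace Minkowski

/-! `lowerMink s A` is `lowerContent (fun ε => volume (thickening ε A)) s` by definition, and
similarly for the other contents and dimensions; the radial ones use `rayNbhd ε A` instead. -/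

def ratio (V : ℝ → ℝ≥0∞) (s ε : ℝ) : ℝ≥0∞ := V ε / ENNReal.ofReal (ε ^ (2 - s))

def lowerContent (V : ℝ → ℝ≥0∞) (s : ℝ) : ℝ≥0∞ := liminf (ratio V s) (𝓝[>] 0)

def upperContent (V : ℝ → ℝ≥0∞) (s : ℝ) : ℝ≥0∞ := limsup (ratio V s) (𝓝[>] 0)

def lowerDim (V : ℝ → ℝ≥0∞) : ℝ := sInf {s | 0 ≤ s ∧ lowerContent V s = 0}

def upperDim (V : ℝ → ℝ≥0∞) : ℝ := sInf {s | 0 ≤ s ∧ upperContent V s = 0}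

variable {V V₁ W : ℝ → ℝ≥0∞} {s t : ℝ}

lemma ratio_le_ratio_of_le (hst : s ≤ t) : ∀ᶠ ε in 𝓝[>] 0, ratio V t ε ≤ ratio V s ε := by
  filter_upwards [Ioo_mem_nhdsGT one_pos] with ε hε
  exact ENNReal.div_le_div_left (ENNReal.ofReal_le_ofReal
    (Real.rpow_le_rpow_of_exponent_ge hε.1 hε.2.le (by linarith))) _

lemma monotone_lowerContent_eq_zero : Monotone fun s => lowerContent V s = 0 :=
  fun _ _ hst hs => le_antisymm ((liminf_le_liminf (ratio_le_ratio_of_le hst)).trans_eq hs) bot_le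

lemma monotone_upperContent_eq_zero : Monotone fun s => upperContent V s = 0 :=
  fun _ _ hst hs => le_antisymm ((limsup_le_limsup (ratio_le_ratio_of_le hst)).trans_eq hs) bot_le

lemma tendsto_ratio_zero {C : ℝ≥0∞} {p : ℝ} (hC : C ≠ ⊤)
    (hW : ∀ᶠ ε in 𝓝[>] 0, W ε ≤ C * ENNReal.ofReal (ε ^ p)) (hps : 2 < p + s) :
    Tendsto (ratio W s) (𝓝[>] 0) (𝓝 0) := by
  have hq : 0 < p + s - 2 := by linarith
  have hbound : ∀ᶠ ε in 𝓝[>] 0, ratio W s ε ≤ C * ENNReal.ofReal (ε ^ (p + s - 2)) := by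
    filter_upwards [hW, self_mem_nhdsWithin] with ε hWε (hε : 0 < ε)
    calc ratio W s ε ≤ C * ENNReal.ofReal (ε ^ p) / ENNReal.ofReal (ε ^ (2 - s)) :=
          ENNReal.div_le_div_right hWε _
      _ = C * ENNReal.ofReal (ε ^ (p + s - 2)) := by
          rw [mul_div_assoc, ← ENNReal.ofReal_div_of_pos (Real.rpow_pos_of_pos hε _),
            ← Real.rpow_sub hε]
          ring_nf
  have hpow : Tendsto (fun ε : ℝ => ε ^ (p + s - 2)) (𝓝[>] 0) (𝓝 0) := by
    simpa [Real.zero_rpow hq.ne'] using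
      (Real.continuousAt_rpow_const 0 _ (Or.inr hq.le)).tendsto.mono_left nhdsWithin_le_nhds
  have hlim := ENNReal.Tendsto.const_mul (ENNReal.tendsto_ofReal hpow) (Or.inr hC)
  rw [ENNReal.ofReal_zero, mul_zero] at hlim
  exact tendsto_of_tendsto_of_tendsto_of_le_of_le' tendsto_const_nhds hlim
    (.of_forall fun _ => zero_le) hbound

lemma lowerContent_eq_of_le_add (hle : ∀ᶠ ε in 𝓝[>] 0, V₁ ε ≤ V ε)
    (hsplit : ∀ᶠ ε in 𝓝[>] 0, V ε ≤ V₁ ε + W ε) (hW : Tendsto (ratio W s) (𝓝[>] 0) (𝓝 0)) :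
    lowerContent V₁ s = lowerContent V s := by
  refine le_antisymm (liminf_le_liminf ?_) ?_
  · filter_upwards [hle] with ε hε using ENNReal.div_le_div_right hε _
  · calc lowerContent V s ≤ liminf (ratio V₁ s + ratio W s) (𝓝[>] 0) := by
          refine liminf_le_liminf ?_
          filter_upwards [hsplit] with ε hε
          exact (ENNReal.div_le_div_right hε _).trans_eq ENNReal.add_div
      _ = lowerContent V₁ s := ENNReal.liminf_add_of_right_tendsto_zero hW _

lemma upperContent_eq_of_le_add (hle : ∀ᶠ ε in 𝓝[>] 0, V₁ ε ≤ V ε)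
    (hsplit : ∀ᶠ ε in 𝓝[>] 0, V ε ≤ V₁ ε + W ε) (hW : Tendsto (ratio W s) (𝓝[>] 0) (𝓝 0)) :
    upperContent V₁ s = upperContent V s := by
  refine le_antisymm (limsup_le_limsup ?_) ?_
  · filter_upwards [hle] with ε hε using ENNReal.div_le_div_right hε _
  · calc upperContent V s ≤ limsup (ratio V₁ s + ratio W s) (𝓝[>] 0) := by
          refine limsup_le_limsup ?_
          filter_upwards [hsplit] with ε hε
          exact (ENNReal.div_le_div_right hε _).trans_eq ENNReal.add_div
      _ = upperContent V₁ s := ENNReal.limsup_add_of_right_tendsto_zero hW _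

lemma lowerDim_le_upperDim (hs : 0 ≤ s) (h : upperContent V s = 0) : lowerDim V ≤ upperDim V :=
  csInf_le_csInf ⟨0, fun _ ht => ht.1⟩ ⟨s, hs, h⟩ fun _ ⟨ht, hzero⟩ =>
    ⟨ht, le_antisymm ((liminf_le_limsup (f := 𝓝[>] (0:ℝ))).trans_eq hzero) bot_le⟩

theorem dim_and_content_eq_of_le_add {C M : ℝ≥0∞} (hle : ∀ᶠ ε in 𝓝[>] 0, V₁ ε ≤ V ε)
    (hsplit : ∀ᶠ ε in 𝓝[>] 0, V ε ≤ V₁ ε + W ε)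
    (hC : C ≠ ⊤) (hW : ∀ᶠ ε in 𝓝[>] 0, W ε ≤ C * ENNReal.ofReal ε)
    (hM : M ≠ ⊤) (hV : ∀ᶠ ε in 𝓝[>] 0, V ε ≤ M) (hdim : 1 < lowerDim V) :
    lowerDim V₁ = lowerDim V ∧ upperDim V₁ = upperDim V ∧
      lowerContent V₁ (lowerDim V) = lowerContent V (lowerDim V) ∧
      upperContent V₁ (upperDim V) = upperContent V (upperDim V) := by
  have hWratio {s : ℝ} (hs : 1 < s) : Tendsto (ratio W s) (𝓝[>] 0) (𝓝 0) :=
    tendsto_ratio_zero (p := 1) hC (by simpa using hW) (by linarith)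
  have hupper : 1 < upperDim V := by
    have hV3 : Tendsto (ratio V 3) (𝓝[>] 0) (𝓝 0) :=
      tendsto_ratio_zero (p := 0) hM (by simpa using hV) (by norm_num)
    exact hdim.trans_le (lowerDim_le_upperDim (by norm_num) hV3.limsup_eq)
  refine ⟨sInf_setOf_nonneg_eq_of_agree_above zero_le_one monotone_lowerContent_eq_zero
      monotone_lowerContent_eq_zero (fun s hs => ?_) hdim,
    sInf_setOf_nonneg_eq_of_agree_above zero_le_one monotone_upperContent_eq_zero
      monotone_upperContent_eq_zero (fun s hs => ?_) hupper,
    lowerContent_eq_of_le_add hle hsplit (hWratio hdim),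
    upperContent_eq_of_le_add hle hsplit (hWratio hupper)⟩
  · rw [lowerContent_eq_of_le_add hle hsplit (hWratio hs)]
  · rw [upperContent_eq_of_le_add hle hsplit (hWratio hs)]

end Minkowski

lemma thickening_image_Icc_subset_biUnion_ball {α : Type*} [PseudoMetricSpace α] {f : ℝ → α}
    {L : NNReal} {a b ε : ℝ} (hf : LipschitzOnWith L f (Icc a b)) (hε : 0 < ε) :
    thickening ε (f '' Icc a b) ⊆
      ⋃ i ∈ Finset.range (⌊(b - a) / ε⌋₊ + 1), ball (f (a + i * ε)) ((L + 1) * ε) := by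
  intro y hy
  obtain ⟨_, ⟨t, ht, rfl⟩, hyt⟩ := mem_thickening_iff.1 hy
  have hta : 0 ≤ (t - a) / ε := div_nonneg (by linarith [ht.1]) hε.le
  have hlo : (⌊(t - a) / ε⌋₊ : ℝ) * ε ≤ t - a := (le_div_iff₀ hε).1 (Nat.floor_le hta)
  have hhi : t - a < (⌊(t - a) / ε⌋₊ + 1) * ε := (div_lt_iff₀ hε).1 (Nat.lt_floor_add_one _)
  have hgrid : a + ⌊(t - a) / ε⌋₊ * ε ∈ Icc a b :=
    ⟨le_add_of_nonneg_right (by positivity), by linarith [ht.2]⟩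
  have hdist : dist t (a + ⌊(t - a) / ε⌋₊ * ε) ≤ ε := by
    rw [Real.dist_eq, abs_of_nonneg (by linarith)]
    linarith
  have hi : ⌊(t - a) / ε⌋₊ ∈ Finset.range (⌊(b - a) / ε⌋₊ + 1) :=
    Finset.mem_range.2 (Nat.lt_succ_of_le (Nat.floor_le_floor (by gcongr; exact ht.2)))
  refine mem_iUnion₂.2 ⟨_, hi, ?_⟩
  calc dist y (f (a + ⌊(t - a) / ε⌋₊ * ε))
      ≤ dist y (f t) + dist (f t) (f (a + ⌊(t - a) / ε⌋₊ * ε)) := dist_triangle _ _ _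
    _ < ε + L * ε := add_lt_add_of_lt_of_le hyt
        ((hf.dist_le_mul _ ht _ hgrid).trans (by gcongr))
    _ = (L + 1) * ε := by ring

open Module in
theorem LipschitzOnWith.exists_measure_thickening_image_Icc_le {E : Type*}
    [NormedAddCommGroup E] [NormedSpace ℝ E] [FiniteDimensional ℝ E] [Nontrivial E]
    [MeasurableSpace E] [BorelSpace E] (μ : Measure E) [μ.IsAddHaarMeasure] {f : ℝ → E}
    {L : NNReal} {a b : ℝ} (hab : a ≤ b) (hf : LipschitzOnWith L f (Icc a b)) :
    ∃ C ≠ ⊤, ∀ ε ∈ Ioc (0 : ℝ) 1,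
      μ (thickening ε (f '' Icc a b)) ≤ C * ENNReal.ofReal (ε ^ (finrank ℝ E - 1)) := by
  set d := finrank ℝ E
  refine ⟨ENNReal.ofReal ((b - a + 1) * (L + 1) ^ d) * μ (ball 0 1),
    mul_ne_top ofReal_ne_top measure_ball_lt_top.ne, ?_⟩
  rintro ε ⟨hε, hε1⟩
  set n := ⌊(b - a) / ε⌋₊
  have hcount : ((n : ℝ) + 1) * ε ≤ b - a + 1 := by
    have := (le_div_iff₀ hε).1 (Nat.floor_le (div_nonneg (sub_nonneg.2 hab) hε.le))
    linarith
  have hpow : ((L + 1) * ε) ^ d = ε * ((L + 1) ^ d * ε ^ (d - 1)) := by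
    have : ε ^ d = ε * ε ^ (d - 1) := by rw [← pow_succ', Nat.sub_add_cancel finrank_pos]
    rw [mul_pow, this]
    ring
  calc μ (thickening ε (f '' Icc a b))
      ≤ ∑ i ∈ Finset.range (n + 1), μ (ball (f (a + i * ε)) ((L + 1) * ε)) :=
        (measure_mono (thickening_image_Icc_subset_biUnion_ball hf hε)).trans
          (measure_biUnion_finset_le _ _)
    _ = ENNReal.ofReal ((n + 1) * ((L + 1) * ε) ^ d) * μ (ball 0 1) := by
        simp only [Measure.addHaar_ball μ _ (by positivity : 0 ≤ (L + 1) * ε),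
          Finset.sum_const, Finset.card_range, nsmul_eq_mul]
        rw [ENNReal.ofReal_mul (by positivity), mul_assoc]
        norm_cast
    _ ≤ ENNReal.ofReal ((b - a + 1) * (L + 1) ^ d * ε ^ (d - 1)) * μ (ball 0 1) := by
        gcongr ENNReal.ofReal ?_ * _
        rw [hpow, ← mul_assoc, mul_assoc (b - a + 1)]
        exact mul_le_mul_of_nonneg_right hcount (by positivity)
    _ = _ := by rw [ENNReal.ofReal_mul (by positivity)]; ring

lemma rayNbhd_mono {ε : ℝ} {A B : Set E2} (hAB : A ⊆ B) : rayNbhd ε A ⊆ rayNbhd ε B :=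
  fun _ ⟨z, hz, hray, hdist⟩ => ⟨z, hAB hz, hray, hdist⟩

lemma rayNbhd_subset_thickening {ε : ℝ} {A : Set E2} : rayNbhd ε A ⊆ thickening ε A :=
  fun _ ⟨z, hz, _, hdist⟩ => mem_thickening_iff.2 ⟨z, hz, hdist⟩

lemma rayNbhd_union_subset {ε : ℝ} {A B : Set E2} :
    rayNbhd ε (A ∪ B) ⊆ rayNbhd ε A ∪ thickening ε B := by
  rintro y ⟨z, hz | hz, hray, hdist⟩
  exacts [Or.inl ⟨z, hz, hray, hdist⟩, Or.inr (mem_thickening_iff.2 ⟨z, hz, hdist⟩)]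

theorem excision_property_general
    (φ₁ ov_φ₁ : ℝ) (hφ : φ₁ < ov_φ₁)
    (h : ℝ → E2)
    (hh_smooth : ContDiffOn ℝ 1 h (Set.Ici φ₁))
    (hh_bdd : Bornology.IsBounded (h '' Set.Ici φ₁))
    (hdim : 1 < lowerDimB (h '' Set.Ici φ₁)) :
    (lowerDimB (h '' Set.Ioi ov_φ₁) = lowerDimB (h '' Set.Ici φ₁) ∧
     upperDimB (h '' Set.Ioi ov_φ₁) = upperDimB (h '' Set.Ici φ₁) ∧
     lowerMink (lowerDimB (h '' Set.Ici φ₁)) (h '' Set.Ioi ov_φ₁) =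
       lowerMink (lowerDimB (h '' Set.Ici φ₁)) (h '' Set.Ici φ₁) ∧
     upperMink (upperDimB (h '' Set.Ici φ₁)) (h '' Set.Ioi ov_φ₁) =
       upperMink (upperDimB (h '' Set.Ici φ₁)) (h '' Set.Ici φ₁)) ∧
    (1 < radLowerDimB (h '' Set.Ici φ₁) →
      radLowerDimB (h '' Set.Ioi ov_φ₁) = radLowerDimB (h '' Set.Ici φ₁) ∧
      radUpperDimB (h '' Set.Ioi ov_φ₁) = radUpperDimB (h '' Set.Ici φ₁) ∧
      radLowerMink (radLowerDimB (h '' Set.Ici φ₁)) (h '' Set.Ioi ov_φ₁) =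
        radLowerMink (radLowerDimB (h '' Set.Ici φ₁)) (h '' Set.Ici φ₁) ∧
      radUpperMink (radUpperDimB (h '' Set.Ici φ₁)) (h '' Set.Ioi ov_φ₁) =
        radUpperMink (radUpperDimB (h '' Set.Ici φ₁)) (h '' Set.Ici φ₁)) := by
  set Γ := h '' Ici φ₁
  set Γ₁ := h '' Ioi ov_φ₁
  set K := h '' Icc φ₁ ov_φ₁
  have hΓ : Γ = Γ₁ ∪ K := by rw [union_comm, ← image_union, Icc_union_Ioi_eq_Ici hφ.le]
  have hΓ₁ : Γ₁ ⊆ Γ := image_mono (Ioi_subset_Ici hφ.le)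
  obtain ⟨L, hL⟩ := (hh_smooth.mono Icc_subset_Ici_self).exists_lipschitzOnWith one_ne_zero
    (convex_Icc _ _) isCompact_Icc
  obtain ⟨C, hC, hK⟩ := hL.exists_measure_thickening_image_Icc_le volume hφ.le
  have hsmall : ∀ᶠ ε in 𝓝[>] (0 : ℝ), ε ∈ Ioc 0 1 := Ioc_mem_nhdsGT one_pos
  have hKε : ∀ᶠ ε in 𝓝[>] 0, volume (thickening ε K) ≤ C * ENNReal.ofReal ε :=
    hsmall.mono fun ε hε => by simpa [finrank_euclideanSpace_fin] using hK ε hε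
  have hM : volume (thickening 1 Γ) ≠ ⊤ := hh_bdd.thickening.measure_lt_top.ne
  refine ⟨Minkowski.dim_and_content_eq_of_le_add (V := fun ε => volume (thickening ε Γ))
      (.of_forall fun ε => measure_mono (thickening_subset_of_subset ε hΓ₁))
      (.of_forall fun ε => by simpa only [hΓ, thickening_union] using measure_union_le _ _)
      hC hKε hM (hsmall.mono fun ε hε => measure_mono (thickening_mono hε.2 Γ)) hdim,
    fun hrad => Minkowski.dim_and_content_eq_of_le_add (V := fun ε => volume (rayNbhd ε Γ))
      (.of_forall fun ε => measure_mono (rayNbhd_mono hΓ₁))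
      (.of_forall fun ε => (measure_mono (hΓ ▸ rayNbhd_union_subset)).trans
        (measure_union_le _ _))
      hC hKε hM (hsmall.mono fun ε hε =>
        measure_mono (rayNbhd_subset_thickening.trans (thickening_mono hε.2 Γ))) hrad⟩

/-- **Lemma (excision property for simple smooth curves)**: removing an initial arc of a
bounded simple smooth curve of lower box dimension `> 1` changes neither the box dimensions
nor the Minkowski contents; analogously for the radial quantities. -/
theorem excision_property
    (φ₁ ov_φ₁ : ℝ) (hφ : φ₁ < ov_φ₁)
    (h : ℝ → E2)
    (hh_smooth : ContDiffOn ℝ 1 h (Set.Ici φ₁))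
    (hh_inj : Set.InjOn h (Set.Ici φ₁))
    (hh_bdd : Bornology.IsBounded (h '' Set.Ici φ₁))
    (hdim : 1 < lowerDimB (h '' Set.Ici φ₁)) :
    (lowerDimB (h '' Set.Ioi ov_φ₁) = lowerDimB (h '' Set.Ici φ₁) ∧
     upperDimB (h '' Set.Ioi ov_φ₁) = upperDimB (h '' Set.Ici φ₁) ∧
     lowerMink (lowerDimB (h '' Set.Ici φ₁)) (h '' Set.Ioi ov_φ₁) =
       lowerMink (lowerDimB (h '' Set.Ici φ₁)) (h '' Set.Ici φ₁) ∧
     upperMink (upperDimB (h '' Set.Ici φ₁)) (h '' Set.Ioi ov_φ₁) =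
       upperMink (upperDimB (h '' Set.Ici φ₁)) (h '' Set.Ici φ₁)) ∧
    (1 < radLowerDimB (h '' Set.Ici φ₁) →
      radLowerDimB (h '' Set.Ioi ov_φ₁) = radLowerDimB (h '' Set.Ici φ₁) ∧
      radUpperDimB (h '' Set.Ioi ov_φ₁) = radUpperDimB (h '' Set.Ici φ₁) ∧
      radLowerMink (radLowerDimB (h '' Set.Ici φ₁)) (h '' Set.Ioi ov_φ₁) =
        radLowerMink (radLowerDimB (h '' Set.Ici φ₁)) (h '' Set.Ici φ₁) ∧
      radUpperMink (radUpperDimB (h '' Set.Ici φ₁)) (h '' Set.Ioi ov_φ₁) =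
        radUpperMink (radUpperDimB (h '' Set.Ici φ₁)) (h '' Set.Ici φ₁)) :=
  excision_property_general φ₁ ov_φ₁ hφ h hh_smooth hh_bdd hdim
end
end
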